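/- Expectation and demonic choice: for every valuation ε, pGCL programs s₁, s₂, pDL formula φ, and expectation lower bound p, we have ε ⊨ [s₁]_p φ and ε ⊨ [s₂]_p φ if and only if ε ⊨ [s₁ ⊓ s₂]_p φ. -/

import Mathlib

namespace PGCL

/-- Program valuations: maps from program variables to real values. -/
abbrev PVal : Type := String → ℝ

/-- Logical environments: maps from logical variables to their values.
    Logical variables are disjoint from program variables and cannot be
    accessed by programs. -/
abbrev LEnv : Type := String → ℝ

/-- Syntax of the probabilistic guarded command language pGCL.
    Expressions are embedded shallowly as functions of the valuation. -/
inductive Stmt : Type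
  | skip : Stmt
  | assign (x : String) (e : PVal → ℝ) : Stmt
  | seq (s₁ s₂ : Stmt) : Stmt
  /-- demonic (non-deterministic) choice `s₁ ⊓ s₂` -/
  | dem (s₁ s₂ : Stmt) : Stmt
  /-- probabilistic choice `s₁ [e] s₂` -/
  | prob (e : PVal → ℝ) (s₁ s₂ : Stmt) : Stmt
  | ifte (e : PVal → Bool) (s₁ s₂ : Stmt) : Stmt
  | whileLoop (e : PVal → Bool) (s : Stmt) : Stmt

/-- States of the MDP semantics: a valuation paired with the remaining program.
    `(ε, Stmt.skip)` is final. -/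
abbrev PState : Type := PVal × Stmt

/-- A positional policy resolves each demonic choice (true = left branch). -/
abbrev Policy : Type := PState → Bool

/-- One-step transition relation of the MDP semantics of pGCL, under policy `π`:
    `Step π σ p σ'` means σ steps to σ' with probability `p`. -/
inductive Step (π : Policy) : PState → ℝ → PState → Prop
  | assign {ε : PVal} {x : String} {e : PVal → ℝ} :
      Step π (ε, Stmt.assign x e) 1 (Function.update ε x (e ε), Stmt.skip)
  | seqSkip {ε ε' : PVal} {s₁ s₂ : Stmt} {p : ℝ} :
      Step π (ε, s₁) p (ε', s₂) → Step π (ε, Stmt.seq Stmt.skip s₁) p (ε', s₂)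
  | seqStep {ε ε' : PVal} {s₁ s₂ s : Stmt} {p : ℝ} :
      Step π (ε, s₁) p (ε', s₂) → Step π (ε, Stmt.seq s₁ s) p (ε', Stmt.seq s₂ s)
  | probL {ε : PVal} {e : PVal → ℝ} {s₁ s₂ : Stmt} :
      0 ≤ e ε → e ε ≤ 1 → Step π (ε, Stmt.prob e s₁ s₂) (e ε) (ε, s₁)
  | probR {ε : PVal} {e : PVal → ℝ} {s₁ s₂ : Stmt} :
      0 ≤ e ε → e ε ≤ 1 → Step π (ε, Stmt.prob e s₁ s₂) (1 - e ε) (ε, s₂)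
  | demL {ε : PVal} {s₁ s₂ : Stmt} :
      π (ε, Stmt.dem s₁ s₂) = true → Step π (ε, Stmt.dem s₁ s₂) 1 (ε, s₁)
  | demR {ε : PVal} {s₁ s₂ : Stmt} :
      π (ε, Stmt.dem s₁ s₂) = false → Step π (ε, Stmt.dem s₁ s₂) 1 (ε, s₂)
  | iteT {ε : PVal} {e : PVal → Bool} {s₁ s₂ : Stmt} :
      e ε = true → Step π (ε, Stmt.ifte e s₁ s₂) 1 (ε, s₁)
  | iteF {ε : PVal} {e : PVal → Bool} {s₁ s₂ : Stmt} :
      e ε = false → Step π (ε, Stmt.ifte e s₁ s₂) 1 (ε, s₂)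
  | whileT {ε : PVal} {e : PVal → Bool} {s : Stmt} :
      e ε = true →
        Step π (ε, Stmt.whileLoop e s) 1 (ε, Stmt.seq s (Stmt.whileLoop e s))
  | whileF {ε : PVal} {e : PVal → Bool} {s : Stmt} :
      e ε = false → Step π (ε, Stmt.whileLoop e s) 1 (ε, Stmt.skip)

/-- Finite paths under a policy `π` from a state to a final state. -/
inductive MPath (π : Policy) : PState → Type
  | nil (ε : PVal) : MPath π (ε, Stmt.skip)
  | cons {σ σ' : PState} (p : ℝ) (h : Step π σ p σ') (rest : MPath π σ') : MPath π σ

/-- The probability of a path: the product of its transition probabilities. -/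
noncomputable def MPath.prob {π : Policy} : {σ : PState} → MPath π σ → ℝ
  | _, .nil _ => 1
  | _, .cons p _ rest => p * rest.prob

/-- The valuation in the final state of a path. -/
def MPath.finalVal {π : Policy} : {σ : PState} → MPath π σ → PVal
  | _, .nil ε => ε
  | _, .cons _ _ rest => rest.finalVal

/-- Expected reward `E_{σ,π} r`: the sum over all paths from σ under π of the
    probability of the path times the reward of its final valuation. -/
noncomputable def expReward (π : Policy) (σ : PState) (r : PVal → ℝ) : ℝ :=
  ∑' ρ : MPath π σ, ρ.prob * r ρ.finalVal

/-- Expectation `𝔼_σ r`: infimum over all policies of the expected reward. -/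
noncomputable def expectation (σ : PState) (r : PVal → ℝ) : ℝ :=
  ⨅ π : Policy, expReward π σ r

open Classical in
/-- Characteristic (indicator) function of a proposition. -/
noncomputable def ind (P : Prop) : ℝ := if P then 1 else 0

/-- Formulae of probabilistic dynamic logic pDL. Atomic formulae are embedded
    shallowly as predicates over the program valuation and logical environment. -/
inductive Formula : Type
  | atom (A : PVal → LEnv → Prop) : Formula
  | neg (φ : Formula) : Formula
  | conj (φ₁ φ₂ : Formula) : Formula
  /-- universal quantification over the logical variable `l` (domain ℝ) -/
  | all (l : String) (φ : Formula) : Formula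
  /-- the p-box modality `[s]_p φ` -/
  | box (s : Stmt) (p : PVal → ℝ) (φ : Formula) : Formula

/-- Satisfaction `ε, η ⊨ φ` of pDL formulae. -/
def Sat : Formula → PVal → LEnv → Prop
  | .atom A, ε, η => A ε η
  | .neg φ, ε, η => ¬ Sat φ ε η
  | .conj φ₁ φ₂, ε, η => Sat φ₁ ε η ∧ Sat φ₂ ε η
  | .all l φ, ε, η => ∀ v : ℝ, Sat φ ε (Function.update η l v)
  | .box s p φ, ε, η => p ε ≤ expectation (ε, s) (fun ε' => ind (Sat φ ε' η))

/-- Disjunction `φ₁ ∨ φ₂ := ¬(¬φ₁ ∧ ¬φ₂)`. -/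
def Formula.disj (φ₁ φ₂ : Formula) : Formula := .neg (.conj (.neg φ₁) (.neg φ₂))

/-- Existential quantification `∃l·φ := ¬∀l·¬φ`. -/
def Formula.ex (l : String) (φ : Formula) : Formula := .neg (.all l (.neg φ))

/-- A program is purely probabilistic if it contains no demonic choice. -/
def DemFree : Stmt → Prop
  | .skip => True
  | .assign _ _ => True
  | .seq s₁ s₂ => DemFree s₁ ∧ DemFree s₂
  | .dem _ _ => False
  | .prob _ s₁ s₂ => DemFree s₁ ∧ DemFree s₂
  | .ifte _ s₁ s₂ => DemFree s₁ ∧ DemFree s₂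
  | .whileLoop _ s => DemFree s

end PGCL

open PGCL

namespace PGCL

lemma Step.p_nonneg {π : Policy} {σ σ' : PState} {p : ℝ} (h : Step π σ p σ') : 0 ≤ p := by
  induction h with
  | assign => norm_num
  | seqSkip _ ih => exact ih
  | seqStep _ ih => exact ih
  | probL h0 h1 => exact h0
  | probR h0 h1 => linarith
  | demL _ => norm_num
  | demR _ => norm_num
  | iteT _ => norm_num
  | iteF _ => norm_num
  | whileT _ => norm_num
  | whileF _ => norm_num

lemma MPath.prob_nonneg {π : Policy} : ∀ {σ : PState} (ρ : MPath π σ), 0 ≤ ρ.prob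
  | _, .nil _ => zero_le_one
  | _, .cons p h rest => mul_nonneg h.p_nonneg rest.prob_nonneg

lemma expReward_nonneg {π : Policy} {σ : PState} {r : PVal → ℝ} (hr : ∀ ε, 0 ≤ r ε) :
    0 ≤ expReward π σ r :=
  tsum_nonneg fun ρ => mul_nonneg ρ.prob_nonneg (hr _)

/-- All `dem`-subterms have `sizeOf < n`. -/
def DemOK (n : ℕ) : Stmt → Prop
  | .skip => True
  | .assign _ _ => True
  | .seq a b => DemOK n a ∧ DemOK n b
  | .dem a b => sizeOf (Stmt.dem a b) < n ∧ DemOK n a ∧ DemOK n b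
  | .prob _ a b => DemOK n a ∧ DemOK n b
  | .ifte _ a b => DemOK n a ∧ DemOK n b
  | .whileLoop _ s => DemOK n s

lemma demOK_of_size : ∀ (s : Stmt) {n : ℕ}, sizeOf s < n → DemOK n s := by
  intro s
  induction s with
  | skip => intro n _; trivial
  | assign x e => intro n _; trivial
  | seq a b iha ihb =>
      intro n h; simp only [Stmt.seq.sizeOf_spec] at h
      exact ⟨iha (by omega), ihb (by omega)⟩
  | dem a b iha ihb =>
      intro n h
      have h' := h; simp only [Stmt.dem.sizeOf_spec] at h'
      exact ⟨h, iha (by omega), ihb (by omega)⟩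
  | prob e a b iha ihb =>
      intro n h; simp only [Stmt.prob.sizeOf_spec] at h
      exact ⟨iha (by omega), ihb (by omega)⟩
  | ifte e a b iha ihb =>
      intro n h; simp only [Stmt.ifte.sizeOf_spec] at h
      exact ⟨iha (by omega), ihb (by omega)⟩
  | whileLoop e s ihs =>
      intro n h; simp only [Stmt.whileLoop.sizeOf_spec] at h
      exact ihs (by omega)

lemma DemOK.step {n : ℕ} {π : Policy} {p : ℝ} :
    ∀ {σ σ' : PState}, Step π σ p σ' → DemOK n σ.2 → DemOK n σ'.2 := by
  intro σ σ' h
  induction h with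
  | assign => intro _; trivial
  | seqSkip _ ih => intro hd; exact ih hd.2
  | seqStep _ ih => intro hd; exact ⟨ih hd.1, hd.2⟩
  | probL _ _ => intro hd; exact hd.1
  | probR _ _ => intro hd; exact hd.2
  | demL _ => intro hd; exact hd.2.1
  | demR _ => intro hd; exact hd.2.2
  | iteT _ => intro hd; exact hd.1
  | iteF _ => intro hd; exact hd.2
  | whileT _ => intro hd; exact ⟨hd, hd⟩
  | whileF _ => intro _; trivial

lemma Step.policy {n : ℕ} {π π' : Policy}
    (hag : ∀ (ε : PVal) (a b : Stmt), sizeOf (Stmt.dem a b) < n →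
      π (ε, Stmt.dem a b) = π' (ε, Stmt.dem a b)) :
    ∀ {σ σ' : PState} {p : ℝ}, Step π σ p σ' → DemOK n σ.2 → Step π' σ p σ' := by
  intro σ σ' p h
  induction h with
  | assign => intro _; exact .assign
  | seqSkip _ ih => intro hd; exact .seqSkip (ih hd.2)
  | seqStep _ ih => intro hd; exact .seqStep (ih hd.1)
  | probL h0 h1 => intro _; exact .probL h0 h1
  | probR h0 h1 => intro _; exact .probR h0 h1
  | demL h => intro hd; exact .demL ((hag _ _ _ hd.1).symm.trans h)
  | demR h => intro hd; exact .demR ((hag _ _ _ hd.1).symm.trans h)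
  | iteT h => intro _; exact .iteT h
  | iteF h => intro _; exact .iteF h
  | whileT h => intro _; exact .whileT h
  | whileF h => intro _; exact .whileF h

def pathMap {n : ℕ} {π π' : Policy}
    (hag : ∀ (ε : PVal) (a b : Stmt), sizeOf (Stmt.dem a b) < n →
      π (ε, Stmt.dem a b) = π' (ε, Stmt.dem a b)) :
    ∀ {σ : PState}, DemOK n σ.2 → MPath π σ → MPath π' σ
  | _, _, .nil ε => .nil ε
  | _, hd, .cons p hs rest =>
      .cons p (Step.policy hag hs hd) (pathMap hag (DemOK.step hs hd) rest)

lemma pathMap_prob {n : ℕ} {π π' : Policy} {hag} :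
    ∀ {σ : PState} (hd : DemOK n σ.2) (ρ : MPath π σ),
      (pathMap (π' := π') hag hd ρ).prob = ρ.prob := by
  intro σ hd ρ
  induction ρ with
  | nil ε => rfl
  | cons p hs rest ih => simp only [pathMap, MPath.prob, ih]

lemma pathMap_finalVal {n : ℕ} {π π' : Policy} {hag} :
    ∀ {σ : PState} (hd : DemOK n σ.2) (ρ : MPath π σ),
      (pathMap (π' := π') hag hd ρ).finalVal = ρ.finalVal := by
  intro σ hd ρ
  induction ρ with
  | nil ε => rfl
  | cons p hs rest ih => simp only [pathMap, MPath.finalVal, ih]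

lemma pathMap_pathMap {n : ℕ} {π π' : Policy} {hag hag'} :
    ∀ {σ : PState} (hd : DemOK n σ.2) (ρ : MPath π σ),
      pathMap (π := π') (π' := π) hag' hd (pathMap (π' := π') hag hd ρ) = ρ := by
  intro σ hd ρ
  induction ρ with
  | nil ε => rfl
  | cons p hs rest ih => simp only [pathMap, ih, MPath.cons.injEq]

lemma expReward_policy {n : ℕ} {π π' : Policy}
    (hag : ∀ (ε : PVal) (a b : Stmt), sizeOf (Stmt.dem a b) < n →
      π (ε, Stmt.dem a b) = π' (ε, Stmt.dem a b))
    {σ : PState} (hd : DemOK n σ.2) (r : PVal → ℝ) :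
    expReward π σ r = expReward π' σ r := by
  have hag' : ∀ (ε : PVal) (a b : Stmt), sizeOf (Stmt.dem a b) < n →
      π' (ε, Stmt.dem a b) = π (ε, Stmt.dem a b) := fun ε a b h => (hag ε a b h).symm
  unfold expReward
  rw [← Equiv.tsum_eq
    (⟨pathMap hag hd, pathMap hag' hd, fun ρ => pathMap_pathMap hd ρ,
      fun ρ => pathMap_pathMap hd ρ⟩ : MPath π σ ≃ MPath π' σ)
    (fun ρ => ρ.prob * r ρ.finalVal)]
  apply tsum_congr
  intro ρ
  simp only [Equiv.coe_fn_mk, pathMap_prob, pathMap_finalVal]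

lemma step_demL {π : Policy} {ε : PVal} {s₁ s₂ : Stmt} {p : ℝ} {σ' : PState}
    (hs : Step π (ε, Stmt.dem s₁ s₂) p σ') (hπ : π (ε, Stmt.dem s₁ s₂) = true) :
    p = 1 ∧ σ' = (ε, s₁) := by
  cases hs with
  | demL _ => exact ⟨rfl, rfl⟩
  | demR h => rw [hπ] at h; cases h

lemma step_demR {π : Policy} {ε : PVal} {s₁ s₂ : Stmt} {p : ℝ} {σ' : PState}
    (hs : Step π (ε, Stmt.dem s₁ s₂) p σ') (hπ : π (ε, Stmt.dem s₁ s₂) = false) :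
    p = 1 ∧ σ' = (ε, s₂) := by
  cases hs with
  | demR _ => exact ⟨rfl, rfl⟩
  | demL h => rw [hπ] at h; cases h

def demPeelL {π : Policy} {ε : PVal} {s₁ s₂ : Stmt}
    (hπ : π (ε, Stmt.dem s₁ s₂) = true) :
    MPath π (ε, Stmt.dem s₁ s₂) → MPath π (ε, s₁)
  | .cons p hs rest => (step_demL hs hπ).2 ▸ rest

def demPeelR {π : Policy} {ε : PVal} {s₁ s₂ : Stmt}
    (hπ : π (ε, Stmt.dem s₁ s₂) = false) :
    MPath π (ε, Stmt.dem s₁ s₂) → MPath π (ε, s₂)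
  | .cons p hs rest => (step_demR hs hπ).2 ▸ rest

def demEquivL {π : Policy} {ε : PVal} {s₁ s₂ : Stmt}
    (hπ : π (ε, Stmt.dem s₁ s₂) = true) :
    MPath π (ε, s₁) ≃ MPath π (ε, Stmt.dem s₁ s₂) where
  toFun ρ := .cons 1 (Step.demL hπ) ρ
  invFun := demPeelL hπ
  left_inv ρ := rfl
  right_inv ρ := by
    cases ρ with
    | cons p hs rest =>
        obtain ⟨hp, hσ⟩ := step_demL hs hπ
        subst hσ; subst hp; rfl

def demEquivR {π : Policy} {ε : PVal} {s₁ s₂ : Stmt}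
    (hπ : π (ε, Stmt.dem s₁ s₂) = false) :
    MPath π (ε, s₂) ≃ MPath π (ε, Stmt.dem s₁ s₂) where
  toFun ρ := .cons 1 (Step.demR hπ) ρ
  invFun := demPeelR hπ
  left_inv ρ := rfl
  right_inv ρ := by
    cases ρ with
    | cons p hs rest =>
        obtain ⟨hp, hσ⟩ := step_demR hs hπ
        subst hσ; subst hp; rfl

lemma expReward_demL {π : Policy} {ε : PVal} {s₁ s₂ : Stmt}
    (hπ : π (ε, Stmt.dem s₁ s₂) = true) (r : PVal → ℝ) :
    expReward π (ε, Stmt.dem s₁ s₂) r = expReward π (ε, s₁) r := by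
  unfold expReward
  rw [← Equiv.tsum_eq (demEquivL hπ) (fun ρ => ρ.prob * r ρ.finalVal)]
  apply tsum_congr
  intro ρ
  show (1 * ρ.prob) * r ρ.finalVal = ρ.prob * r ρ.finalVal
  rw [one_mul]

lemma expReward_demR {π : Policy} {ε : PVal} {s₁ s₂ : Stmt}
    (hπ : π (ε, Stmt.dem s₁ s₂) = false) (r : PVal → ℝ) :
    expReward π (ε, Stmt.dem s₁ s₂) r = expReward π (ε, s₂) r := by
  unfold expReward
  rw [← Equiv.tsum_eq (demEquivR hπ) (fun ρ => ρ.prob * r ρ.finalVal)]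
  apply tsum_congr
  intro ρ
  show (1 * ρ.prob) * r ρ.finalVal = ρ.prob * r ρ.finalVal
  rw [one_mul]

lemma ind_nonneg (P : Prop) : 0 ≤ ind P := by
  unfold ind; split <;> norm_num

end PGCL


/-- Expectation and demonic choice. -/
theorem demonic_choice (ε : PVal) (η : LEnv) (s₁ s₂ : Stmt) (φ : Formula)
    (p : PVal → ℝ) (hp : ∀ ε', p ε' ∈ Set.Icc (0 : ℝ) 1) :
    (Sat (.box s₁ p φ) ε η ∧ Sat (.box s₂ p φ) ε η) ↔
      Sat (.box (.dem s₁ s₂) p φ) ε η := by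
  classical
  simp only [Sat]
  set r : PVal → ℝ := fun ε' => ind (Sat φ ε' η) with hr
  have hrn : ∀ ε', 0 ≤ r ε' := fun ε' => ind_nonneg _
  have bdd : ∀ s : Stmt, BddBelow (Set.range fun π : Policy => expReward π (ε, s) r) :=
    fun s => ⟨0, by rintro _ ⟨π, rfl⟩; exact expReward_nonneg hrn⟩
  unfold expectation
  constructor
  · rintro ⟨h₁, h₂⟩
    apply le_ciInf
    intro π
    cases hπ : π (ε, Stmt.dem s₁ s₂) with
    | false => rw [expReward_demR hπ]; exact h₂.trans (ciInf_le (bdd s₂) π)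
    | true  => rw [expReward_demL hπ]; exact h₁.trans (ciInf_le (bdd s₁) π)
  · intro h
    have hd₁ : DemOK (sizeOf (Stmt.dem s₁ s₂)) s₁ :=
      demOK_of_size s₁ (by simp only [Stmt.dem.sizeOf_spec]; omega)
    have hd₂ : DemOK (sizeOf (Stmt.dem s₁ s₂)) s₂ :=
      demOK_of_size s₂ (by simp only [Stmt.dem.sizeOf_spec]; omega)
    constructor
    · apply le_ciInf
      intro π
      set π₁ : Policy := fun σ => if σ = (ε, Stmt.dem s₁ s₂) then true else π σ with hπ₁
      have hag : ∀ (ε'' : PVal) (a b : Stmt),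
          sizeOf (Stmt.dem a b) < sizeOf (Stmt.dem s₁ s₂) →
          π (ε'', Stmt.dem a b) = π₁ (ε'', Stmt.dem a b) := by
        intro ε'' a b hsz
        have hne : (ε'', Stmt.dem a b) ≠ (ε, Stmt.dem s₁ s₂) := by
          intro hEq
          have := congrArg (fun q : PState => sizeOf q.2) hEq
          simp only at this
          omega
        simp [hπ₁, hne]
      have h1 : expReward π (ε, s₁) r = expReward π₁ (ε, s₁) r :=
        expReward_policy hag hd₁ r
      have h2 : expReward π₁ (ε, Stmt.dem s₁ s₂) r = expReward π₁ (ε, s₁) r :=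
        expReward_demL (by simp [hπ₁]) r
      rw [h1, ← h2]
      exact h.trans (ciInf_le (bdd _) π₁)
    · apply le_ciInf
      intro π
      set π₂ : Policy := fun σ => if σ = (ε, Stmt.dem s₁ s₂) then false else π σ with hπ₂
      have hag : ∀ (ε'' : PVal) (a b : Stmt),
          sizeOf (Stmt.dem a b) < sizeOf (Stmt.dem s₁ s₂) →
          π (ε'', Stmt.dem a b) = π₂ (ε'', Stmt.dem a b) := by
        intro ε'' a b hsz
        have hne : (ε'', Stmt.dem a b) ≠ (ε, Stmt.dem s₁ s₂) := by
          intro hEq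
          have := congrArg (fun q : PState => sizeOf q.2) hEq
          simp only at this
          omega
        simp [hπ₂, hne]
      have h1 : expReward π (ε, s₂) r = expReward π₂ (ε, s₂) r :=
        expReward_policy hag hd₂ r
      have h2 : expReward π₂ (ε, Stmt.dem s₁ s₂) r = expReward π₂ (ε, s₂) r :=
        expReward_demR (by simp [hπ₂]) r
      rw [h1, ← h2]
      exact h.trans (ciInf_le (bdd _) π₂)
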